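/- Combining the previous two facts: if there exists a symmetric positive definite P with M_ηᵀ P M_η - P ≺ 0 for all 2^ν vertex matrices M_η, then for every τ ∈ [0, τ̄] the matrix Ā(τ) := M₀ + Σ_i α_i(τ) M_i is Schur stable. -/

import Mathlib

/-!
For an eigenpair `A v = μ v` of the complexification, the quadratic form of `P - AᵀPA` at `v`
equals `(1 - |μ|²) v*Pv`; so a Lyapunov matrix `P ≻ 0` with `P - AᵀPA ≻ 0` forces `|μ| < 1`.
Since `A ↦ AᵀPA` is convex in the Loewner order, the matrices `A` admitting the fixed `P` form
a convex set. The matrix `Ā(τ)` depends affinely on the coefficient vector `(α_i(τ))_i`, which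
lies in the box `∏ [α_i⁻, α_i⁺]`, the convex hull of its `2^ν` vertices; hence the inequality
at the vertex matrices `M_η` propagates to every `Ā(τ)`.
-/

open Matrix

/-- `M` is Schur stable: every complex eigenvalue has modulus `< 1`. -/
def SchurStable {d : ℕ} (M : Matrix (Fin d) (Fin d) ℝ) : Prop :=
  ∀ μ : ℂ, (Matrix.charpoly (M.map ((↑) : ℝ → ℂ))).IsRoot μ → ‖μ‖ < 1

open Set

section Complexification

variable {n : Type*} [Fintype n]

theorem Matrix.re_star_dotProduct_map_ofReal_mulVec (Q : Matrix n n ℝ) (v : n → ℂ) :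
    (star v ⬝ᵥ Q.map ((↑) : ℝ → ℂ) *ᵥ v).re =
      (fun i ↦ (v i).re) ⬝ᵥ Q *ᵥ (fun i ↦ (v i).re) +
        (fun i ↦ (v i).im) ⬝ᵥ Q *ᵥ (fun i ↦ (v i).im) := by
  simp only [dotProduct, mulVec, Pi.star_apply, map_apply, Complex.re_sum, Finset.mul_sum,
    ← Finset.sum_add_distrib]
  refine Finset.sum_congr rfl fun i _ ↦ Finset.sum_congr rfl fun j _ ↦ ?_
  simp only [Complex.star_def, Complex.mul_re, Complex.mul_im, Complex.conj_re, Complex.conj_im,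
    Complex.ofReal_re, Complex.ofReal_im]
  ring

theorem Matrix.PosDef.re_star_dotProduct_map_ofReal_mulVec_pos {Q : Matrix n n ℝ} (hQ : Q.PosDef)
    {v : n → ℂ} (hv : v ≠ 0) : 0 < (star v ⬝ᵥ Q.map ((↑) : ℝ → ℂ) *ᵥ v).re := by
  rw [re_star_dotProduct_map_ofReal_mulVec]
  have hnonneg (x : n → ℝ) : 0 ≤ x ⬝ᵥ Q *ᵥ x := by
    simpa using hQ.posSemidef.dotProduct_mulVec_nonneg x
  by_cases hre : (fun i ↦ (v i).re) = 0
  · have him : (fun i ↦ (v i).im) ≠ 0 := fun him ↦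
      hv <| funext fun i ↦ Complex.ext (congrFun hre i) (congrFun him i)
    exact add_pos_of_nonneg_of_pos (hnonneg _) (by simpa using hQ.dotProduct_mulVec_pos him)
  · exact add_pos_of_pos_of_nonneg (by simpa using hQ.dotProduct_mulVec_pos hre) (hnonneg _)

end Complexification

theorem Matrix.exists_mulVec_eq_smul_of_isRoot_charpoly {n K : Type*} [Fintype n] [DecidableEq n]
    [Field K] {A : Matrix n n K} {μ : K} (hμ : A.charpoly.IsRoot μ) :
    ∃ v, v ≠ 0 ∧ A *ᵥ v = μ • v := by
  have : Module.End.HasEigenvalue A.toLin' μ := by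
    rwa [Module.End.hasEigenvalue_iff_isRoot_charpoly, charpoly_toLin']
  obtain ⟨v, hv, hv0⟩ := this.exists_hasEigenvector
  exact ⟨v, hv0, by simpa [Module.End.hasEigenvector_iff] using hv⟩

theorem Matrix.star_dotProduct_conjTranspose_mul_mul_mulVec_of_mulVec_eq_smul {n R : Type*}
    [Fintype n] [CommRing R] [StarRing R] {A Q : Matrix n n R} {v : n → R} {μ : R}
    (hv : A *ᵥ v = μ • v) :
    star v ⬝ᵥ (Aᴴ * Q * A) *ᵥ v = star μ * μ * (star v ⬝ᵥ Q *ᵥ v) := by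
  rw [← mulVec_mulVec, ← mulVec_mulVec, hv, dotProduct_mulVec, ← star_mulVec, hv,
    star_smul, mulVec_smul, smul_dotProduct, dotProduct_smul, smul_eq_mul, smul_eq_mul, mul_assoc]

theorem schurStable_of_posDef_sub_transpose_mul_mul {d : ℕ} {A P : Matrix (Fin d) (Fin d) ℝ}
    (hP : P.PosDef) (hA : (P - Aᵀ * P * A).PosDef) : SchurStable A := by
  intro μ hμ
  obtain ⟨v, hv0, hv⟩ := exists_mulVec_eq_smul_of_isRoot_charpoly hμ
  have hdecay : (star v ⬝ᵥ (P - Aᵀ * P * A).map ((↑) : ℝ → ℂ) *ᵥ v).re =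
      (1 - ‖μ‖ ^ 2) * (star v ⬝ᵥ P.map ((↑) : ℝ → ℂ) *ᵥ v).re := by
    have hmap : (P - Aᵀ * P * A).map ((↑) : ℝ → ℂ) =
        P.map (↑) - (A.map ((↑) : ℝ → ℂ))ᴴ * P.map (↑) * A.map (↑) := by
      have hconj : (A.map ((↑) : ℝ → ℂ))ᴴ = Aᵀ.map (↑) := by ext; simp
      rw [hconj, Matrix.map_sub _ Complex.ofReal_sub]
      exact congrArg _ ((Matrix.map_mul (f := Complex.ofRealHom)).trans
        (congrArg (· * _) Matrix.map_mul))
    rw [hmap, sub_mulVec, dotProduct_sub,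
      star_dotProduct_conjTranspose_mul_mul_mulVec_of_mulVec_eq_smul hv, RCLike.star_def,
      Complex.conj_mul', Complex.sub_re, ← Complex.ofReal_pow, Complex.re_ofReal_mul]
    ring
  have hPv := hP.re_star_dotProduct_map_ofReal_mulVec_pos hv0
  have hAv := hdecay ▸ hA.re_star_dotProduct_map_ofReal_mulVec_pos hv0
  have hsq : ‖μ‖ ^ 2 < 1 := by nlinarith
  exact (pow_lt_one_iff_of_nonneg (norm_nonneg μ) two_ne_zero).mp hsq

theorem Matrix.convex_setOf_posDef {n : Type*} [Fintype n] :
    Convex ℝ {X : Matrix n n ℝ | X.PosDef} := by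
  intro X hX Y hY a b ha hb hab
  rcases ha.eq_or_lt with rfl | ha
  · simpa [show b = 1 by linarith] using hY
  · exact (hX.smul ha).add_posSemidef (hY.posSemidef.smul hb)

theorem Matrix.sub_transpose_mul_mul_convex_combination {n : Type*} [Fintype n]
    (P A B : Matrix n n ℝ) {a b : ℝ} (hab : a + b = 1) :
    P - (a • A + b • B)ᵀ * P * (a • A + b • B) =
      a • (P - Aᵀ * P * A) + b • (P - Bᵀ * P * B) + (a * b) • ((A - B)ᵀ * P * (A - B)) := by
  obtain rfl : b = 1 - a := by linarith
  simp only [transpose_add, transpose_smul, transpose_sub, add_mul, mul_add, sub_mul, mul_sub,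
    smul_mul_assoc, mul_smul_comm, smul_sub, smul_add, smul_smul]
  module

theorem Matrix.convex_setOf_posDef_sub_transpose_mul_mul {n : Type*} [Fintype n]
    {P : Matrix n n ℝ} (hP : P.PosSemidef) :
    Convex ℝ {A : Matrix n n ℝ | (P - Aᵀ * P * A).PosDef} := by
  intro A hA B hB a b ha hb hab
  rw [mem_ofPred_eq, sub_transpose_mul_mul_convex_combination P A B hab]
  refine (convex_setOf_posDef hA hB ha hb hab).add_posSemidef (.smul ?_ (mul_nonneg ha hb))
  simpa using hP.conjTranspose_mul_mul_same (A - B)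

theorem Set.Icc_subset_convexHull_pi_pair {ι : Type*} [Finite ι] {a b : ι → ℝ} :
    Icc a b ⊆ convexHull ℝ (univ.pi fun i ↦ {a i, b i}) := by
  rw [convexHull_pi, ← pi_univ_Icc]
  exact pi_mono fun i _ ↦ by simpa only [convexHull_pair] using Icc_subset_segment

theorem Set.exists_eq_ite_of_mem_pi_pair {ι α : Type*} {a b c : ι → α}
    (hc : c ∈ univ.pi fun i ↦ {a i, b i}) :
    ∃ η : ι → Bool, c = fun i ↦ if η i then b i else a i := by
  classical
  refine ⟨fun i ↦ c i = b i, funext fun i ↦ ?_⟩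
  by_cases h : c i = b i
  · simp [h]
  · simpa [h] using hc i trivial

theorem schurStable_of_vertex_lmis_general {d ν : ℕ} (τbar : ℝ)
    (α : Fin ν → ℝ → ℝ)
    (αm αp : Fin ν → ℝ)
    (hm : ∀ i, IsLeast (α i '' Set.Icc 0 τbar) (αm i))
    (hp : ∀ i, IsGreatest (α i '' Set.Icc 0 τbar) (αp i))
    (M₀ : Matrix (Fin d) (Fin d) ℝ) (M : Fin ν → Matrix (Fin d) (Fin d) ℝ)
    (P : Matrix (Fin d) (Fin d) ℝ) (hP : P.PosDef)
    (hvert : ∀ η : Fin ν → Bool,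
      (P - (M₀ + ∑ i, (if η i then αp i else αm i) • M i)ᵀ * P *
            (M₀ + ∑ i, (if η i then αp i else αm i) • M i)).PosDef) :
    ∀ τ ∈ Set.Icc (0 : ℝ) τbar, SchurStable (M₀ + ∑ i, α i τ • M i) := by
  intro τ hτ
  set S := (fun c : Fin ν → ℝ ↦ M₀ + Fintype.linearCombination ℝ M c) ⁻¹'
    {A | (P - Aᵀ * P * A).PosDef}
  have hS : Convex ℝ S :=
    ((convex_setOf_posDef_sub_transpose_mul_mul hP.posSemidef).translate_preimage_right
      M₀).linear_preimage _
  have hvertices : (univ.pi fun i ↦ {αm i, αp i}) ⊆ S := fun c hc ↦ by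
    obtain ⟨η, rfl⟩ := exists_eq_ite_of_mem_pi_pair hc
    simpa [S, Fintype.linearCombination_apply] using hvert η
  have hbox : (fun i ↦ α i τ) ∈ Icc αm αp :=
    ⟨fun i ↦ (hm i).2 (mem_image_of_mem _ hτ), fun i ↦ (hp i).2 (mem_image_of_mem _ hτ)⟩
  refine schurStable_of_posDef_sub_transpose_mul_mul hP ?_
  simpa [S, Fintype.linearCombination_apply] using
    convexHull_min hvertices hS (Icc_subset_convexHull_pi_pair hbox)

/-- If a common Lyapunov matrix `P` certifies the discrete Lyapunov inequality at all
`2^ν` vertex matrices `M_η`, then `Ā(τ) = M₀ + Σ_i α_i(τ) M_i` is Schur stable for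
every `τ ∈ [0, τ̄]`. -/
theorem schurStable_of_vertex_lmis {d ν : ℕ} (τbar : ℝ) (hτbar : 0 < τbar)
    (α : Fin ν → ℝ → ℝ) (hcont : ∀ i, ContinuousOn (α i) (Set.Icc 0 τbar))
    (αm αp : Fin ν → ℝ)
    (hm : ∀ i, IsLeast (α i '' Set.Icc 0 τbar) (αm i))
    (hp : ∀ i, IsGreatest (α i '' Set.Icc 0 τbar) (αp i))
    (M₀ : Matrix (Fin d) (Fin d) ℝ) (M : Fin ν → Matrix (Fin d) (Fin d) ℝ)
    (P : Matrix (Fin d) (Fin d) ℝ) (hP : P.PosDef)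
    (hvert : ∀ η : Fin ν → Bool,
      (P - (M₀ + ∑ i, (if η i then αp i else αm i) • M i)ᵀ * P *
            (M₀ + ∑ i, (if η i then αp i else αm i) • M i)).PosDef) :
    ∀ τ ∈ Set.Icc (0 : ℝ) τbar, SchurStable (M₀ + ∑ i, α i τ • M i) :=
  schurStable_of_vertex_lmis_general τbar α αm αp hm hp M₀ M P hP hvert
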